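/- arXiv:0708.4217 — 4 statements merged into one kernel-verified Lean document; each statement's English description precedes it below -/
import Mathlib

section
/- Every central word over the alphabet {a,b} is a palindrome. -/
/-!
Alphabet `{a, b}` is modelled by `Bool`, with `false` playing the role of the
letter `a` and `true` the role of the letter `b`.
-/

/-- A finite word over `{a, b}` is balanced if any two factors of equal length
have numbers of occurrences of the letter `a` differing by at most `1`. -/
def BalancedList (w : List Bool) : Prop :=
  ∀ u v : List Bool, u <:+: w → v <:+: w → u.length = v.length →
    |(u.count false : ℤ) - (v.count false : ℤ)| ≤ 1

/-- A finite word `w` is central if both `awb` and `bwa` are balanced. -/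
def IsCentral (w : List Bool) : Prop :=
  BalancedList (false :: (w ++ [true])) ∧ BalancedList (true :: (w ++ [false]))

/-!
If `w` is not a palindrome, let `p` be the longest common prefix of `w` and `w̃`. Then `w`
begins with `p x` and ends with `y p̃` for two distinct letters `x ≠ y`. In `x w y` the
factors `x p x` and `y p̃ y` have the same length, but their numbers of `a`'s differ by `2`,
so `x w y` is not balanced, and `w` is not central.
-/

theorem List.exists_eq_append_cons_of_ne {α : Type*} :
    ∀ {l₁ l₂ : List α}, l₁.length = l₂.length → l₁ ≠ l₂ →
      ∃ p x y s t, x ≠ y ∧ l₁ = p ++ x :: s ∧ l₂ = p ++ y :: t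
  | [], [], _, hne => absurd rfl hne
  | x :: s, y :: t, hlen, hne => by
    by_cases hxy : x = y
    · subst hxy
      obtain ⟨p, x', y', s', t', hne', rfl, rfl⟩ :=
        exists_eq_append_cons_of_ne (Nat.succ.inj hlen) fun h => hne (h ▸ rfl)
      exact ⟨x :: p, x', y', s', t', hne', rfl, rfl⟩
    · exact ⟨[], x, y, s, t, hxy, rfl, rfl⟩

theorem not_balancedList_of_prefix_of_suffix {w p : List Bool} {x : Bool}
    (hpre : p ++ [x] <+: w) (hsuf : (!x) :: p.reverse <:+ w) :
    ¬ BalancedList (x :: (w ++ [!x])) := by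
  intro hbal
  obtain ⟨s, rfl⟩ := hpre
  obtain ⟨t, hw⟩ := hsuf
  have hu : x :: (p ++ [x]) <:+: x :: (p ++ [x] ++ s ++ [!x]) :=
    ⟨[], s ++ [!x], by simp⟩
  have hv : (!x) :: p.reverse ++ [!x] <:+: x :: (p ++ [x] ++ s ++ [!x]) :=
    ⟨x :: t, [], by simp [← hw]⟩
  have hgap : |((x :: (p ++ [x])).count false : ℤ) - (((!x) :: p.reverse ++ [!x]).count false)|
      = 2 := by
    cases x <;> simp [List.count_append, List.count_reverse] <;> ring_nf <;> norm_num
  have := hbal _ _ hu hv (by simp)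
  omega

theorem IsCentral.balancedList {w : List Bool} (h : IsCentral w) (x : Bool) :
    BalancedList (x :: (w ++ [!x])) := by
  cases x
  exacts [h.1, h.2]

/-- Every central word over the alphabet `{a, b}` is a palindrome. -/
theorem central_isPalindrome (w : List Bool) (h : IsCentral w) :
    w.reverse = w := by
  by_contra hne
  obtain ⟨p, x, y, s, t, hxy, hw, hw_rev⟩ :=
    List.exists_eq_append_cons_of_ne w.length_reverse.symm (Ne.symm hne)
  have hpre : p ++ [x] <+: w := ⟨s, by simp [hw]⟩
  have hsuf : (!x) :: p.reverse <:+ w :=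
    ⟨t.reverse, by rw [← Bool.eq_not.mpr hxy.symm, ← List.reverse_reverse w, hw_rev]; simp⟩
  exact not_balancedList_of_prefix_of_suffix hpre hsuf (h.balancedList x)
end

section
/- A bi-infinite word s over {a,b} does not satisfy the Markoff condition if and only if s or its reversal s̃ contains a factor of the form a m̃ a b m b for some finite word m (possibly empty). -/
/-!
Alphabet `{a, b}` is modelled by `Bool`, with `false` playing the role of the
letter `a` and `true` the role of the letter `b`.
-/

/-- `w` is a (finite) factor of the bi-infinite word `s : ℤ → α`. -/
def IsFactorZ {α : Type*} (s : ℤ → α) (w : List α) : Prop :=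
  ∃ i : ℤ, ∀ (k : ℕ) (h : k < w.length), s (i + k) = w.get ⟨k, h⟩

/-- The bi-infinite word `s` satisfies the Markoff condition: for every
factorization `s = ũ x y v` with `x ≠ y` (here `x = s i`, `y = s (i+1)`,
`u` is the left part read backwards, `v` the right part), either `u = v`, or
`u` and `v` share a common prefix `m` (of some length `n`) after which `u`
carries the letter `y` and `v` carries the letter `x`. -/
def MarkoffCondition {α : Type*} (s : ℤ → α) : Prop :=
  ∀ i : ℤ, s i ≠ s (i + 1) →
    (∀ k : ℕ, s (i - 1 - k) = s (i + 2 + k)) ∨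
      ∃ n : ℕ, (∀ k : ℕ, k < n → s (i - 1 - k) = s (i + 2 + k)) ∧
        s (i - 1 - n) = s (i + 1) ∧ s (i + 2 + n) = s i

def Bad (s : ℤ → Bool) : Prop :=
  ∃ i : ℤ, ∃ n : ℕ, s i ≠ s (i + 1) ∧ (∀ k : ℕ, k < n → s (i - 1 - k) = s (i + 2 + k)) ∧
    s (i - 1 - n) = s i ∧ s (i + 2 + n) = s (i + 1)

lemma bad_congr {s t : ℤ → Bool} (h : ∀ i, s i = t i) (hb : Bad s) : Bad t := by
  obtain ⟨i, n, h1, h2, h3, h4⟩ := hb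
  exact ⟨i, n, by rw [← h, ← h]; exact h1,
    fun k hk => by rw [← h, ← h]; exact h2 k hk,
    by rw [← h, ← h]; exact h3, by rw [← h, ← h]; exact h4⟩

lemma not_markoff_iff_bad (s : ℤ → Bool) : ¬ MarkoffCondition s ↔ Bad s := by
  constructor
  · intro h
    unfold MarkoffCondition at h
    push_neg at h
    obtain ⟨i, hne, hA, hB⟩ := h
    obtain ⟨k0, hk0⟩ := hA
    have hex : ∃ k : ℕ, s (i - 1 - (k:ℤ)) ≠ s (i + 2 + (k:ℤ)) := ⟨k0, hk0⟩
    classical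
    obtain ⟨n, hmin, hneq⟩ : ∃ n : ℕ, (∀ k : ℕ, k < n → s (i - 1 - (k:ℤ)) = s (i + 2 + (k:ℤ))) ∧
        s (i - 1 - (n:ℤ)) ≠ s (i + 2 + (n:ℤ)) := by
      refine ⟨Nat.find hex, fun k hk => ?_, Nat.find_spec hex⟩
      have := Nat.find_min hex hk
      simpa using this
    have hB' := hB n hmin
    clear hk0 hB hex
    refine ⟨i, n, hne, hmin, ?_, ?_⟩ <;>
      (cases h1 : s i <;> cases h2 : s (i + 1) <;> cases h3 : s (i - 1 - (n:ℤ)) <;>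
        cases h4 : s (i + 2 + (n:ℤ)) <;> simp_all)
  · rintro ⟨i, n, h1, h2, h3, h4⟩ hM
    rcases hM i h1 with hall | ⟨n', hn'1, hn'2, hn'3⟩
    · exact h1 (by rw [← h3, ← h4, hall n])
    · rcases lt_trichotomy n n' with hlt | rfl | hlt
      · exact h1 (by rw [← h3, ← h4, hn'1 n hlt])
      · exact h1 (by rw [← h3, hn'2])
      · exact h1 (by rw [← hn'2, ← hn'3, h2 n' hlt])

abbrev W (m : List Bool) : List Bool :=
  false :: (m.reverse ++ false :: true :: (m ++ [true]))

lemma W_length (m : List Bool) : (W m).length = 2 * m.length + 4 := by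
  simp [W]; omega

lemma W_get_0 (m : List Bool) : (W m)[0]'(by rw [W_length]; omega) = false := rfl

lemma W_get_rev (m : List Bool) (j : ℕ) (hj : j < m.length) :
    (W m)[j + 1]'(by rw [W_length]; omega) = m[m.length - 1 - j]'(by omega) := by
  simp only [W, List.getElem_cons, List.getElem_append, List.getElem_reverse,
    List.length_reverse]
  split_ifs <;> first | rfl | omega | (congr 1 <;> omega) | simp_all

lemma W_get_n1 (m : List Bool) : (W m)[m.length + 1]'(by rw [W_length]; omega) = false := by
  simp only [W, List.getElem_cons, List.getElem_append, List.getElem_reverse,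
    List.length_reverse]
  split_ifs <;> first | rfl | omega | (congr 1 <;> omega) | simp_all

lemma W_get_n2 (m : List Bool) : (W m)[m.length + 2]'(by rw [W_length]; omega) = true := by
  simp only [W, List.getElem_cons, List.getElem_append, List.getElem_reverse,
    List.length_reverse]
  split_ifs <;> first | rfl | omega | (congr 1 <;> omega) | simp_all

lemma W_get_m (m : List Bool) (j : ℕ) (hj : j < m.length) :
    (W m)[m.length + 3 + j]'(by rw [W_length]; omega) = m[j] := by
  simp only [W, List.getElem_cons, List.getElem_append, List.getElem_reverse,
    List.length_reverse]
  split_ifs <;> first | rfl | omega | (congr 1 <;> omega) | simp_all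

lemma W_get_last (m : List Bool) : (W m)[2 * m.length + 3]'(by rw [W_length]; omega) = true := by
  simp only [W, List.getElem_cons, List.getElem_append, List.getElem_reverse,
    List.length_reverse]
  split_ifs <;> first | rfl | omega | (congr 1 <;> omega) | simp_all

lemma factor_bad {s : ℤ → Bool} {m : List Bool} (h : IsFactorZ s (W m)) : Bad s := by
  obtain ⟨j, hj⟩ := h
  have key : ∀ k : ℕ, (hk : k < 2 * m.length + 4) →
      s (j + k) = (W m)[k]'(by rw [W_length]; exact hk) := by
    intro k hk
    exact hj k (by rw [W_length]; omega)
  set n := m.length with hn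
  refine ⟨j + ((n : ℤ) + 1), n, ?_, ?_, ?_, ?_⟩
  · have h1 := (key (n + 1) (by omega)).trans (W_get_n1 m)
    have h2 := (key (n + 2) (by omega)).trans (W_get_n2 m)
    rw [show j + ((n : ℤ) + 1) = j + ((n + 1 : ℕ) : ℤ) by push_cast; ring,
      show j + (((n + 1 : ℕ) : ℤ)) + 1 = j + ((n + 2 : ℕ) : ℤ) by push_cast; ring,
      h1, h2]
    simp
  · intro k hk
    have h1 := (key ((n - 1 - k) + 1) (by omega)).trans (W_get_rev m (n - 1 - k) (by omega))
    have h2 := (key (n + 3 + k) (by omega)).trans (W_get_m m k (by omega))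
    rw [show j + ((n : ℤ) + 1) - 1 - (k : ℤ) = j + (((n - 1 - k) + 1 : ℕ) : ℤ) by
        push_cast [Nat.cast_sub, show (1:ℕ) ≤ n - k by omega, show k ≤ n by omega] <;> omega,
      show j + ((n : ℤ) + 1) + 2 + (k : ℤ) = j + ((n + 3 + k : ℕ) : ℤ) by push_cast; ring,
      h1, h2]
    congr 1
    omega
  · have h1 := (key 0 (by omega)).trans (W_get_0 m)
    have h2 := (key (n + 1) (by omega)).trans (W_get_n1 m)
    rw [show j + ((n : ℤ) + 1) - 1 - (n : ℤ) = j + ((0 : ℕ) : ℤ) by push_cast; ring,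
      show j + ((n : ℤ) + 1) = j + ((n + 1 : ℕ) : ℤ) by push_cast; ring, h1, h2]
  · have h1 := (key (2 * n + 3) (by omega)).trans (W_get_last m)
    have h2 := (key (n + 2) (by omega)).trans (W_get_n2 m)
    rw [show j + ((n : ℤ) + 1) + 2 + (n : ℤ) = j + ((2 * n + 3 : ℕ) : ℤ) by push_cast; ring,
      show j + ((n : ℤ) + 1) + 1 = j + ((n + 2 : ℕ) : ℤ) by push_cast; ring, h1, h2]

lemma bad_factor {s : ℤ → Bool} {i : ℤ} {n : ℕ}
    (h0 : s i = false) (h1 : s (i + 1) = true)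
    (h2 : ∀ k : ℕ, k < n → s (i - 1 - k) = s (i + 2 + k))
    (h3 : s (i - 1 - n) = false) (h4 : s (i + 2 + n) = true) :
    IsFactorZ s (W (List.ofFn fun k : Fin n => s (i + 2 + (k : ℕ)))) := by
  set m : List Bool := List.ofFn fun k : Fin n => s (i + 2 + (k : ℕ)) with hm
  have hml : m.length = n := by simp [hm]
  have getm : ∀ k : ℕ, (hk : k < n) → m[k]'(by omega) = s (i + 2 + (k : ℕ)) := by
    intro k hk
    simp [hm]
  refine ⟨i - 1 - n, ?_⟩
  intro k hk
  rw [List.get_eq_getElem]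
  rw [W_length, hml] at hk
  by_cases e0 : k = 0
  · subst e0
    rw [W_get_0, show i - 1 - (n : ℤ) + ((0 : ℕ) : ℤ) = i - 1 - n by push_cast; ring]
    exact h3
  by_cases e1 : k ≤ n
  · obtain ⟨j, hjn, rfl⟩ : ∃ j, j < n ∧ k = j + 1 := ⟨k - 1, by omega, by omega⟩
    rw [W_get_rev m j (by omega), getm (m.length - 1 - j) (by omega),
      show i - 1 - (n : ℤ) + ((j + 1 : ℕ) : ℤ) = i - 1 - ((n - 1 - j : ℕ) : ℤ) by
        push_cast [show j ≤ n - 1 by omega, show (1:ℕ) ≤ n by omega] <;> omega]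
    rw [h2 (n - 1 - j) (by omega)]
    congr 2
    omega
  by_cases e2 : k = n + 1
  · subst e2
    rw [show (W _)[n + 1]'_ = (W m)[m.length + 1]'(by rw [W_length]; omega) by congr 1; omega,
      W_get_n1, show i - 1 - (n : ℤ) + ((n + 1 : ℕ) : ℤ) = i by push_cast; ring]
    exact h0
  by_cases e3 : k = n + 2
  · subst e3
    rw [show (W _)[n + 2]'_ = (W m)[m.length + 2]'(by rw [W_length]; omega) by congr 1; omega,
      W_get_n2, show i - 1 - (n : ℤ) + ((n + 2 : ℕ) : ℤ) = i + 1 by push_cast; ring]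
    exact h1
  by_cases e4 : k ≤ 2 * n + 2
  · obtain ⟨j, hjn, rfl⟩ : ∃ j, j < n ∧ k = n + 3 + j := ⟨k - n - 3, by omega, by omega⟩
    rw [show (W _)[n + 3 + j]'_ = (W m)[m.length + 3 + j]'(by rw [W_length]; omega) by
        congr 1; omega,
      W_get_m m j (by omega), getm j (by omega),
      show i - 1 - (n : ℤ) + ((n + 3 + j : ℕ) : ℤ) = i + 2 + (j : ℕ) by push_cast; ring]
  · have e5 : k = 2 * n + 3 := by omega
    subst e5
    rw [show (W _)[2 * n + 3]'_ = (W m)[2 * m.length + 3]'(by rw [W_length]; omega) by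
        congr 1; omega,
      W_get_last, show i - 1 - (n : ℤ) + ((2 * n + 3 : ℕ) : ℤ) = i + 2 + n by push_cast; ring]
    exact h4

/-- A bi-infinite word `s` over `{a, b}` fails the Markoff condition if and
only if `s` or its reversal `s̃` (given by `s̃ᵢ = s₋ᵢ`) contains a factor of
the form `a m̃ a b m b` for some finite word `m` (possibly empty). -/
theorem not_markoffCondition_iff (s : ℤ → Bool) :
    ¬ MarkoffCondition s ↔
      ∃ m : List Bool,
        IsFactorZ s (false :: (m.reverse ++ false :: true :: (m ++ [true]))) ∨
        IsFactorZ (fun i => s (-i))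
          (false :: (m.reverse ++ false :: true :: (m ++ [true]))) := by
  rw [not_markoff_iff_bad]
  constructor
  · rintro ⟨i, n, h1, h2, h3, h4⟩
    cases h0 : s i with
    | false =>
      have h1' : s (i + 1) = true := by cases hb : s (i + 1) <;> simp_all
      exact ⟨_, Or.inl (bad_factor h0 h1' h2 (h3.trans h0) (h4.trans h1'))⟩
    | true =>
      set t : ℤ → Bool := fun j => s (-j) with ht
      have h1' : s (i + 1) = false := by cases hb : s (i + 1) <;> simp_all
      have t0 : t (-i - 1) = false := by
        show s (-(-i - 1)) = false
        rw [show -(-i - 1) = i + 1 by ring]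
        exact h1'
      have t1 : t (-i - 1 + 1) = true := by
        rw [ht]
        show s (-(-i - 1 + 1)) = true
        rw [show -(-i - 1 + 1) = i by ring]
        exact h0
      have t2 : ∀ k : ℕ, k < n → t (-i - 1 - 1 - k) = t (-i - 1 + 2 + k) := by
        intro k hk
        show s (-(-i - 1 - 1 - k)) = s (-(-i - 1 + 2 + k))
        rw [show -(-i - 1 - 1 - (k : ℤ)) = i + 2 + k by ring,
          show -(-i - 1 + 2 + (k : ℤ)) = i - 1 - k by ring]
        exact (h2 k hk).symm
      have t3 : t (-i - 1 - 1 - n) = false := by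
        show s (-(-i - 1 - 1 - (n : ℤ))) = false
        rw [show -(-i - 1 - 1 - (n : ℤ)) = i + 2 + n by ring]
        exact h4.trans h1'
      have t4 : t (-i - 1 + 2 + n) = true := by
        show s (-(-i - 1 + 2 + (n : ℤ))) = true
        rw [show -(-i - 1 + 2 + (n : ℤ)) = i - 1 - n by ring]
        exact h3.trans h0
      exact ⟨_, Or.inr (bad_factor t0 t1 t2 t3 t4)⟩
  · rintro ⟨m, h | h⟩
    · exact factor_bad h
    · have hb : Bad (fun j => s (-j)) := factor_bad h
      obtain ⟨i, n, h1, h2, h3, h4⟩ := hb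
      refine ⟨-i - 1, n, ?_, ?_, ?_, ?_⟩
      · intro hc
        apply h1
        show s (-i) = s (-(i + 1))
        rw [show (-i - 1 + 1 : ℤ) = -i by ring] at hc
        rw [show (-i - 1 : ℤ) = -(i + 1) by ring] at hc
        exact hc.symm
      · intro k hk
        have := h2 k hk
        simp only [] at this
        rw [show -i - 1 - 1 - (k : ℤ) = -(i + 2 + k) by ring,
          show -i - 1 + 2 + (k : ℤ) = -(i - 1 - k) by ring]
        exact this.symm
      · have := h4
        simp only [] at this
        rw [show -i - 1 - 1 - (n : ℤ) = -(i + 2 + n) by ring,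
          show -i - 1 = -(i + 1) by ring]
        exact this
      · have := h3
        simp only [] at this
        rw [show -i - 1 + 2 + (n : ℤ) = -(i - 1 - n) by ring,
          show -i - 1 + 1 = -i by ring]
        exact this
end

section
/- If m is a central word over {a,b}, then the periodic bi-infinite word ⋯(amb)(amb)(amb)⋯, obtained by repeating the block a·m·b bi-infinitely, is balanced (equivalently, satisfies the Markoff condition). -/
/-- A bi-infinite word over `{a, b}` is balanced if any two factors of equal
length have numbers of occurrences of the letter `a` differing by at most 1. -/
def BalancedZ (s : ℤ → Bool) : Prop :=
  ∀ u v : List Bool, IsFactorZ s u → IsFactorZ s v → u.length = v.length →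
    |(u.count false : ℤ) - (v.count false : ℤ)| ≤ 1

/-- The periodic bi-infinite word with period block `p`: the letter at
position `i ∈ ℤ` is the `(i mod |p|)`-th letter of `p`. -/
def periodicWord (p : List Bool) : ℤ → Bool :=
  fun i => p.getD (i % (p.length : ℤ)).toNat false


/-!
Write `w = amb` and `φ L` for the number of `a`s in the prefix of length `L` of `w`. Balance of
`awb` against `bwa` forces prefixes and suffixes of `m` of equal length to contain equally many
`a`s. Hence every factor of `w` of length `L` contains `φ L` or `φ L - 1` letters `a`, and so does
every window of length `L ≤ |w|` of the periodic word, which is either a factor of `w` or a proper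
suffix of `w` followed by a prefix of `w`. Every full period contains the same number of `a`s, so
for each length the windows of the periodic word take two consecutive counts at most: it is
balanced. The Markoff condition follows from balance by comparing, around a change of letter, a
window with its mirror image.
-/

section Window

variable {α : Type*} (s : ℤ → α)

def window (i : ℤ) (L : ℕ) : List α := List.ofFn fun k : Fin L => s (i + k)

@[simp] theorem length_window (i : ℤ) (L : ℕ) : (window s i L).length = L := List.length_ofFn

variable {s}

theorem isFactorZ_iff_exists_window {u : List α} : IsFactorZ s u ↔ ∃ i, window s i u.length = u := by
  refine exists_congr fun i => ⟨fun h => ?_, fun h k hk => ?_⟩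
  · exact List.ext_getElem (by simp) fun k _ hk => by simpa [window] using h k hk
  · rw [List.get_eq_getElem, ← List.getElem_of_eq h (by simpa using hk)]
    simp [window]

theorem isFactorZ_window (i : ℤ) (L : ℕ) : IsFactorZ s (window s i L) :=
  isFactorZ_iff_exists_window.2 ⟨i, by rw [length_window]⟩

theorem window_add (i : ℤ) (L₁ L₂ : ℕ) :
    window s i (L₁ + L₂) = window s i L₁ ++ window s (i + L₁) L₂ := by
  simp only [window, List.ofFn_add, Fin.val_castLE, Fin.val_natAdd, Nat.cast_add, add_assoc]

theorem window_succ (i : ℤ) (L : ℕ) : window s i (L + 1) = s i :: window s (i + 1) L := by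
  rw [add_comm, window_add]
  simp [window]

theorem window_succ' (i : ℤ) (L : ℕ) : window s i (L + 1) = window s i L ++ [s (i + L)] := by
  rw [window_add]
  simp [window]

theorem reverse_window {i j : ℤ} {n : ℕ} (h : ∀ k < n, s (i - 1 - k) = s (j + k)) :
    (window s (i - n) n).reverse = window s j n := by
  refine List.ext_getElem (by simp) fun k hk _ => ?_
  simp only [List.length_reverse, length_window] at hk
  rw [List.getElem_reverse]
  simp only [window, List.getElem_ofFn, List.length_ofFn, ← h k hk]
  congr 1
  omega

theorem Function.Periodic.window_add_period {N : ℕ} (hs : Function.Periodic s N) (i : ℤ) (L : ℕ) :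
    window s (i + N) L = window s i L :=
  congrArg List.ofFn (funext fun k => by rw [add_right_comm, hs])

theorem Function.Periodic.window_emod {N : ℕ} (hs : Function.Periodic s N) (i : ℤ) (L : ℕ) :
    window s i L = window s (i % N) L := by
  refine congrArg List.ofFn (funext fun k => ?_)
  rw [Int.emod_def, sub_add_eq_add_sub, mul_comm]
  exact (hs.sub_int_mul_eq (i / N)).symm

theorem Function.Periodic.count_window_period_eq [BEq α] {N : ℕ} (hs : Function.Periodic s N)
    (a : α) (i j : ℤ) : (window s i N).count a = (window s j N).count a := by
  have step : ∀ i, (window s (i + 1) N).count a = (window s i N).count a := fun i => by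
    have h := (window_succ' (s := s) i N).symm.trans (window_succ i N)
    rw [hs i] at h
    simpa [List.count_append, List.count_cons] using (congrArg (List.count a) h).symm
  have from_zero : ∀ i, (window s i N).count a = (window s 0 N).count a := fun i => by
    induction i using Int.induction_on with
    | zero => rfl
    | succ i ih => rw [step, ih]
    | pred i ih => rw [← ih, ← step, sub_add_cancel]
  rw [from_zero i, from_zero j]

end Window

def HasBalancedWindows (s : ℤ → Bool) (L : ℕ) : Prop :=
  ∃ c, ∀ i, (window s i L).count false ≤ c ∧ c ≤ (window s i L).count false + 1

section Balanced

variable {s : ℤ → Bool}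

theorem balancedZ_of_forall_hasBalancedWindows (h : ∀ L, HasBalancedWindows s L) :
    BalancedZ s := by
  intro u v hu hv huv
  obtain ⟨i, hi⟩ := isFactorZ_iff_exists_window.1 hu
  obtain ⟨j, hj⟩ := isFactorZ_iff_exists_window.1 hv
  obtain ⟨c, hc⟩ := h u.length
  rw [← hi, ← hj, ← huv, abs_le]
  have := hc i
  have := hc j
  omega

theorem Function.Periodic.hasBalancedWindows_add_period {N : ℕ} (hs : Function.Periodic s N)
    {L : ℕ} (h : HasBalancedWindows s L) : HasBalancedWindows s (L + N) := by
  obtain ⟨c, hc⟩ := h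
  refine ⟨c + (window s 0 N).count false, fun i => ?_⟩
  rw [window_add, List.count_append, hs.count_window_period_eq _ (i + L) 0]
  have := hc i
  omega

theorem Function.Periodic.balancedZ_of_hasBalancedWindows {N : ℕ} (hs : Function.Periodic s N)
    (hN : 0 < N) (h : ∀ L ≤ N, HasBalancedWindows s L) : BalancedZ s := by
  refine balancedZ_of_forall_hasBalancedWindows fun L => ?_
  induction L using Nat.strong_induction_on with
  | _ L ih =>
    rcases le_or_gt L N with hL | hL
    · exact h L hL
    · obtain ⟨K, rfl⟩ := Nat.exists_eq_add_of_le' hL.le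
      exact hs.hasBalancedWindows_add_period (ih K (by omega))

end Balanced

theorem BalancedZ.markoffCondition {s : ℤ → Bool} (hs : BalancedZ s) : MarkoffCondition s := by
  intro i hi
  by_cases hall : ∀ k : ℕ, s (i - 1 - k) = s (i + 2 + k)
  · exact Or.inl hall
  push Not at hall
  set n := Nat.find hall
  have hagree : ∀ k < n, s (i - 1 - k) = s (i + 2 + k) := fun k hk =>
    not_not.1 (Nat.find_min hall hk)
  refine Or.inr ⟨n, hagree, ?_⟩
  by_contra hswap
  have hends : s (i - 1 - n) = s i ∧ s (i + 2 + n) = s (i + 1) := by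
    have := Nat.find_spec hall
    revert hi hswap this
    cases s i <;> cases s (i + 1) <;> cases s (i - 1 - n) <;> cases s (i + 2 + n) <;> decide
  -- `s (i-1-n) ⋯ s i` and `s (i+1) ⋯ s (i+2+n)` have mirror-image middles but opposite ends,
  -- so their numbers of `a`s differ by 2
  have hu : window s (i - 1 - n) (n + 2) =
      s (i - 1 - n) :: (window s (i - n) n ++ [s i]) := by
    rw [window_succ, window_succ', show i - 1 - n + 1 = i - n by ring,
      show i - n + n = i by ring]
  have hv : window s (i + 1) (n + 2) =
      s (i + 1) :: ((window s (i - n) n).reverse ++ [s (i + 2 + n)]) := by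
    rw [window_succ, window_succ', reverse_window hagree, show i + 1 + 1 = i + 2 by ring]
  have hbal := hs _ _ (isFactorZ_window (i - 1 - n) (n + 2)) (isFactorZ_window (i + 1) (n + 2))
    (by simp)
  rw [hu, hv, hends.1, hends.2, abs_le] at hbal
  revert hi hbal
  cases s i <;> cases s (i + 1) <;> simp [List.count_append, List.count_reverse]
  omega

theorem periodicWord_periodic (p : List Bool) : Function.Periodic (periodicWord p) p.length := by
  intro i
  simp only [periodicWord, Int.add_emod_right]

theorem periodicWord_natCast (p : List Bool) {k : ℕ} (hk : k < p.length) :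
    periodicWord p k = p[k] := by
  have hmod : (k : ℤ) % p.length = k := Int.emod_eq_of_lt (Int.natCast_nonneg k) (by omega)
  simp [periodicWord, hmod, hk]

theorem window_periodicWord {p : List Bool} {k L : ℕ} (h : k + L ≤ p.length) :
    window (periodicWord p) k L = (p.drop k).take L := by
  refine List.ext_getElem (by simp; omega) fun t ht _ => ?_
  simp only [length_window] at ht
  simp only [window, List.getElem_ofFn, List.getElem_take, List.getElem_drop]
  exact_mod_cast periodicWord_natCast p (by omega)

section Central

variable {m : List Bool}

theorem IsCentral.count_take_eq_count_drop (hm : IsCentral m) (j : ℕ) :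
    (m.take j).count false = (m.drop (m.length - j)).count false := by
  have hlen : (m.take j).length = (m.drop (m.length - j)).length := by simp; omega
  have hpre (x y : Bool) : x :: m.take j <:+: x :: (m ++ [y]) :=
    ⟨[], m.drop j ++ [y], by simp [← List.append_assoc]⟩
  have hsuf (x y : Bool) : m.drop (m.length - j) ++ [y] <:+: x :: (m ++ [y]) :=
    ⟨x :: m.take (m.length - j), [], by simp [← List.append_assoc]⟩
  have hab := hm.1 _ _ (hpre false true) (hsuf false true) (by simp [hlen])
  have hba := hm.2 _ _ (hpre true false) (hsuf true false) (by simp [hlen])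
  simp [List.count_append, abs_le] at hab hba
  omega

theorem IsCentral.count_drop_add_one (hm : IsCentral m) {r : ℕ} (hr : 0 < r)
    (hrN : r < m.length + 2) :
    ((false :: (m ++ [true])).drop r).count false + 1 =
      ((false :: (m ++ [true])).take (m.length + 2 - r)).count false := by
  obtain ⟨r, rfl⟩ := Nat.exists_eq_add_one_of_ne_zero hr.ne'
  have hr' : r ≤ m.length := by omega
  rw [show m.length + 2 - (r + 1) = (m.length - r) + 1 by omega, List.drop_succ_cons,
    List.take_succ_cons, List.drop_append_of_le_length hr',
    List.take_append_of_le_length (by omega)]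
  simp [List.count_append, hm.count_take_eq_count_drop, Nat.sub_sub_self hr']

theorem IsCentral.count_le_count_take_length_of_infix (hm : IsCentral m) {u : List Bool}
    (hu : u <:+: false :: (m ++ [true])) :
    u.count false ≤ ((false :: (m ++ [true])).take u.length).count false ∧
      ((false :: (m ++ [true])).take u.length).count false ≤ u.count false + 1 := by
  rcases List.infix_cons_iff.1 hu with hpre | hu
  · rw [← List.prefix_iff_eq_take.1 hpre]
    omega
  rcases eq_or_ne u [] with rfl | hne
  · simp
  rcases List.infix_concat_iff.1 hu with hsuf | hinf
  · have hlt : u.length < m.length + 2 := by have := hsuf.length_le; simp at this; omega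
    have hdrop := List.suffix_iff_eq_drop.1 (hsuf.trans (List.suffix_cons false _))
    have := hm.count_drop_add_one (r := m.length + 2 - u.length) (by omega)
      (by have := List.length_pos_iff.2 hne; omega)
    rw [show (false :: (m ++ [true])).length = m.length + 2 by simp] at hdrop
    rw [← hdrop, Nat.sub_sub_self hlt.le] at this
    omega
  · obtain ⟨L, hL⟩ := Nat.exists_eq_add_one_of_ne_zero (List.length_pos_iff.2 hne).ne'
    have hLm : L < m.length := by have := hinf.length_le; omega
    have htake : (false :: (m ++ [true])).take u.length = false :: m.take L := by
      rw [hL, List.take_succ_cons, List.take_append_of_le_length hLm.le]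
    have hpre (x y : Bool) : x :: m.take L <:+: x :: (m ++ [y]) :=
      ⟨[], m.drop L ++ [y], by simp [← List.append_assoc]⟩
    have hmid (x y : Bool) : u <:+: x :: (m ++ [y]) :=
      hinf.trans (List.infix_append [x] m [y])
    have hab := hm.1 _ _ (hmid false true) (hpre false true) (by simp; omega)
    have hba := hm.2 _ _ (hmid true false) (hpre true false) (by simp; omega)
    rw [htake]
    simp [abs_le] at hab hba ⊢
    omega

theorem IsCentral.count_drop_append_take (hm : IsCentral m) {r y : ℕ} (hr : 0 < r) (hy : y ≤ r)
    (hrN : r < m.length + 2) :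
    let w := false :: (m ++ [true])
    (w.drop r ++ w.take y).count false ≤ (w.take (m.length + 2 - r + y)).count false ∧
      (w.take (m.length + 2 - r + y)).count false ≤ (w.drop r ++ w.take y).count false + 1 := by
  dsimp only
  have hsuffix := hm.count_drop_add_one hr hrN
  have hfactor := hm.count_le_count_take_length_of_infix
    ((List.take_prefix y _).isInfix.trans (List.drop_suffix (m.length + 2 - r) _).isInfix)
  rw [List.length_take, List.length_drop, min_eq_left (by simp; omega)] at hfactor
  rw [List.take_add, List.count_append, List.count_append]
  omega

theorem IsCentral.hasBalancedWindows_periodicWord (hm : IsCentral m) {L : ℕ}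
    (hL : L ≤ m.length + 2) : HasBalancedWindows (periodicWord (false :: (m ++ [true]))) L := by
  set w := false :: (m ++ [true])
  have hN : w.length = m.length + 2 := by simp [w]
  have hs := periodicWord_periodic w
  refine ⟨(w.take L).count false, fun i => ?_⟩
  obtain ⟨r, hr, hrN⟩ : ∃ r : ℕ, (r : ℤ) = i % w.length ∧ r < w.length :=
    ⟨(i % w.length).toNat, Int.toNat_of_nonneg (Int.emod_nonneg _ (by omega)),
      by have := Int.emod_lt_of_pos i (by omega : (0 : ℤ) < w.length); omega⟩
  rw [hs.window_emod, ← hr]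
  rcases le_or_gt (r + L) w.length with hin | hwrap
  · rw [window_periodicWord hin]
    have := hm.count_le_count_take_length_of_infix
      ((List.take_prefix L _).isInfix.trans (List.drop_suffix r w).isInfix)
    rwa [List.length_take, List.length_drop, min_eq_left (by omega)] at this
  · obtain ⟨y, rfl⟩ : ∃ y, L = (w.length - r) + y := ⟨L - (w.length - r), by omega⟩
    have hstart : (r : ℤ) + (w.length - r : ℕ) = ((0 : ℕ) : ℤ) + w.length := by omega
    rw [window_add, hstart, hs.window_add_period, window_periodicWord (by omega),
      window_periodicWord (by omega), List.drop_zero, List.take_of_length_le (by simp), hN]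
    rw [hN] at hwrap hrN
    exact hm.count_drop_append_take (by omega) (by omega) hrN

end Central

/-- If `m` is a central word over `{a, b}`, then the periodic bi-infinite word
`⋯(amb)(amb)(amb)⋯` is balanced (equivalently, satisfies the Markoff
condition). -/
theorem periodic_amb_balanced (m : List Bool) (h : IsCentral m) :
    BalancedZ (periodicWord (false :: (m ++ [true]))) ∧
      MarkoffCondition (periodicWord (false :: (m ++ [true]))) := by
  have hbal : BalancedZ (periodicWord (false :: (m ++ [true]))) :=
    (periodicWord_periodic _).balancedZ_of_hasBalancedWindows (by simp)
      fun _ hL => h.hasBalancedWindows_periodicWord (by simpa using hL)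
  exact ⟨hbal, hbal.markoffCondition⟩
end

section
/- Let w be a finite word over {a,b} that is not a palindrome, say w = uxv = z y ũ for finite words u, v, z and letters {x,y} = {a,b} (the first position from the left where w and its reversal w̃ differ carries letter x in w and y in w̃). Then the finite word x w y is not balanced: it contains the two equal-length factors x u x and y ũ y, whose numbers of occurrences of the letter a differ by 2. -/
/-- Let `w` be a finite word over `{a, b}` that is not a palindrome, say
`w = u x v = z y ũ` with `x ≠ y`.  Then `x w y` is not balanced: it contains
the equal-length factors `x u x` and `y ũ y`, whose numbers of occurrences of
the letter `a` differ by `2`. -/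
theorem not_palindrome_xwy_not_balanced (w u v z : List Bool) (x y : Bool)
    (hxy : x ≠ y) (hw : w ≠ w.reverse)
    (h₁ : w = u ++ x :: v) (h₂ : w = z ++ y :: u.reverse) :
    ¬ BalancedList (x :: (w ++ [y])) ∧
      (x :: (u ++ [x])) <:+: (x :: (w ++ [y])) ∧
      (y :: (u.reverse ++ [y])) <:+: (x :: (w ++ [y])) ∧
      (x :: (u ++ [x])).length = (y :: (u.reverse ++ [y])).length ∧
      |((x :: (u ++ [x])).count false : ℤ) -
        ((y :: (u.reverse ++ [y])).count false : ℤ)| = 2 := by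
  have hinf1 : (x :: (u ++ [x])) <:+: (x :: (w ++ [y])) := by
    refine ⟨[], v ++ [y], ?_⟩
    simp [h₁]
  have hinf2 : (y :: (u.reverse ++ [y])) <:+: (x :: (w ++ [y])) := by
    refine ⟨x :: z, [], ?_⟩
    simp [h₂]
  have hlen : (x :: (u ++ [x])).length = (y :: (u.reverse ++ [y])).length := by
    simp
  have hcount : |((x :: (u ++ [x])).count false : ℤ) -
      ((y :: (u.reverse ++ [y])).count false : ℤ)| = 2 := by
    have hu : u.reverse.count false = u.count false := List.count_reverse ..
    rcases Bool.eq_false_or_eq_true x with hx | hx <;>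
      rcases Bool.eq_false_or_eq_true y with hy | hy <;>
      subst hx <;> subst hy <;>
      simp_all [List.count_cons, List.count_append] <;>
        (rw [abs_eq (by norm_num : (0:ℤ) ≤ 2)]; omega)
  refine ⟨?_, hinf1, hinf2, hlen, hcount⟩
  intro hb
  have h := hb _ _ hinf1 hinf2 hlen
  rw [hcount] at h
  norm_num at h
end
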